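/- The infinite dihedral group D_∞ = ℤ/2 * ℤ/2 is not telescopic: there exists a finite group Γ (for instance any nonabelian finite group, or ℤ/3) such that no finite-index subgroup H ≤ D_∞ satisfies N(H)/H ≅ Γ. -/

import Mathlib

/-!
Realise `ℤ/2 ∗ ℤ/2` as `DihedralGroup 0`, the generators going to the reflections `sr 0` and
`sr 1`. Let `H` be a subgroup with `N(H) ≠ H`. If `H` contains no reflection, it consists of
rotations, which `sr 0` inverts; so `sr 0` is an involution in `N(H) \ H`. If `H` contains a
reflection `s`, then `g² ∈ H` for every `g ∈ N(H)`: reflections square to `1`, and for a rotation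
`g` one has `g² = (g s g⁻¹) s⁻¹`. Either way `N(H)/H` is trivial or has an element of order `2`,
so it is never `ℤ/3`.
-/

open Monoid

namespace Subgroup

variable {G : Type*} [Group G]

abbrev weylGroup (H : Subgroup G) : Type _ :=
  normalizer (H : Set G) ⧸ H.subgroupOf (normalizer (H : Set G))

theorem not_normalizer_le_of_nontrivial {H : Subgroup G} [h : Nontrivial H.weylGroup] :
    ¬ normalizer (H : Set G) ≤ H := by
  rw [← subgroupOf_eq_top]
  intro htop
  rw [weylGroup, htop] at h
  exact not_subsingleton _ (QuotientGroup.subsingleton_quotient_top (G := normalizer (H : Set G)))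

theorem orderOf_weylGroup_mk_eq_two {H : Subgroup G} {x : G}
    (hxN : x ∈ normalizer (H : Set G)) (hx : x ∉ H) (hx2 : x * x ∈ H) :
    orderOf (QuotientGroup.mk ⟨x, hxN⟩ : H.weylGroup) = 2 := by
  apply orderOf_eq_prime
  · rw [sq, ← QuotientGroup.mk_mul, QuotientGroup.eq_one_iff]
    exact hx2
  · rw [Ne, QuotientGroup.eq_one_iff]
    exact hx

end Subgroup

namespace DihedralGroup

variable {n : ℕ}

theorem sr_zero_mem_normalizer {H : Subgroup (DihedralGroup n)} (hH : ∀ i, sr i ∉ H) :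
    sr 0 ∈ Subgroup.normalizer (H : Set (DihedralGroup n)) := by
  refine Subgroup.mem_normalizer_iff.mpr fun x => ?_
  rcases x with i | i
  · simp only [sr_mul_r, inv_sr, sr_mul_sr, zero_add, zero_sub]
    rw [← inv_r, inv_mem_iff]
  · simp [sr_mul_sr, r_mul_sr, hH]

theorem mul_self_mem_of_mem_normalizer {H : Subgroup (DihedralGroup n)} {i : ZMod n}
    (hi : sr i ∈ H) {g : DihedralGroup n} (hg : g ∈ Subgroup.normalizer (H : Set _)) :
    g * g ∈ H := by
  rcases g with j | j
  · have hcomm : r j * sr i * (r j)⁻¹ * (sr i)⁻¹ = r j * r j := by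
      simp only [r_mul_sr, inv_r, sr_mul_r, inv_sr, sr_mul_sr, r_mul_r]
      ring_nf
    rw [← hcomm]
    exact H.mul_mem ((Subgroup.mem_normalizer_iff.mp hg _).mp hi) (H.inv_mem hi)
  · simp

theorem exists_mul_self_mem_of_not_normalizer_le {H : Subgroup (DihedralGroup n)}
    (hH : ¬ Subgroup.normalizer (H : Set _) ≤ H) :
    ∃ x ∈ Subgroup.normalizer (H : Set _), x ∉ H ∧ x * x ∈ H := by
  by_cases hsr : ∃ i, sr i ∈ H
  · obtain ⟨i, hi⟩ := hsr
    obtain ⟨x, hxN, hx⟩ := SetLike.not_le_iff_exists.mp hH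
    exact ⟨x, hxN, hx, mul_self_mem_of_mem_normalizer hi hxN⟩
  · push Not at hsr
    exact ⟨sr 0, sr_zero_mem_normalizer hsr, hsr 0, by simp⟩

end DihedralGroup

section

variable {G : Type*} [Group G]

theorem Multiplicative.zmodTwo_ofAdd_one_mul_self :
    (.ofAdd 1 * .ofAdd 1 : Multiplicative (ZMod 2)) = 1 := by
  decide

theorem Multiplicative.zmodTwo_eq_one_or_eq_ofAdd_one (x : Multiplicative (ZMod 2)) :
    x = 1 ∨ x = .ofAdd 1 := by
  revert x
  decide

def involutionHom (g : G) (hg : g * g = 1) : Multiplicative (ZMod 2) →* G where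
  toFun x := if x = 1 then 1 else g
  map_one' := if_pos rfl
  map_mul' x y := by
    have hne : (.ofAdd 1 : Multiplicative (ZMod 2)) ≠ 1 := by decide
    rcases x.zmodTwo_eq_one_or_eq_ofAdd_one with rfl | rfl <;>
      rcases y.zmodTwo_eq_one_or_eq_ofAdd_one with rfl | rfl <;>
      simp [hg, hne, Multiplicative.zmodTwo_ofAdd_one_mul_self]

theorem involutionHom_ofAdd_one (g : G) (hg : g * g = 1) :
    involutionHom g hg (.ofAdd 1) = g :=
  if_neg (t := (1 : G)) (show (.ofAdd 1 : Multiplicative (ZMod 2)) ≠ 1 by decide)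

theorem Multiplicative.zmodTwo_monoidHom_ext {f f' : Multiplicative (ZMod 2) →* G}
    (h : f (.ofAdd 1) = f' (.ofAdd 1)) : f = f' := by
  refine MonoidHom.ext fun x => ?_
  rcases x.zmodTwo_eq_one_or_eq_ofAdd_one with rfl | rfl
  · simp only [map_one]
  · exact h

theorem zpow_mul_eq_mul_zpow_neg {a c : G} (ha : a * a = 1) (hac : a * c * a = c⁻¹) (k : ℤ) :
    c ^ k * a = a * c ^ (-k) := by
  have hconj : a * c * a⁻¹ = c⁻¹ := by rwa [inv_eq_of_mul_eq_one_right ha]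
  calc c ^ k * a = (a * c * a⁻¹) ^ (-k) * a := by rw [hconj, inv_zpow', neg_neg]
    _ = a * c ^ (-k) := by rw [conj_zpow, inv_mul_cancel_right]

namespace DihedralGroup

/-- `ZMod 0` is `ℤ` only up to unfolding `ZMod`; `ZMod.cast` makes the identification explicit. -/
def zeroLift (a c : G) (ha : a * a = 1) (hac : a * c * a = c⁻¹) : DihedralGroup 0 →* G where
  toFun
    | r i => c ^ (i.cast : ℤ)
    | sr i => a * c ^ (i.cast : ℤ)
  map_one' := by
    show c ^ ((0 : ZMod 0).cast : ℤ) = 1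
    simp
  map_mul' x y := by
    have key := zpow_mul_eq_mul_zpow_neg ha hac
    rcases x with i | i <;> rcases y with j | j
    · simp [r_mul_r, ZMod.cast_add dvd_rfl, zpow_add]
    · simp only [r_mul_sr, ZMod.cast_sub dvd_rfl]
      rw [← mul_assoc, key, mul_assoc, ← zpow_add, neg_add_eq_sub]
    · simp [sr_mul_r, ZMod.cast_add dvd_rfl, zpow_add, mul_assoc]
    · simp only [sr_mul_sr, ZMod.cast_sub dvd_rfl]
      rw [mul_assoc, ← mul_assoc _ a, key, ← mul_assoc, ← mul_assoc, ha, one_mul, ← zpow_add,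
        neg_add_eq_sub]

@[simp]
theorem zeroLift_r (a c : G) (ha : a * a = 1) (hac : a * c * a = c⁻¹) (i : ZMod 0) :
    zeroLift a c ha hac (r i) = c ^ (i.cast : ℤ) :=
  rfl

@[simp]
theorem zeroLift_sr (a c : G) (ha : a * a = 1) (hac : a * c * a = c⁻¹) (i : ZMod 0) :
    zeroLift a c ha hac (sr i) = a * c ^ (i.cast : ℤ) :=
  rfl

end DihedralGroup

end

open DihedralGroup

def coprodZModTwoEquiv :
    Coprod (Multiplicative (ZMod 2)) (Multiplicative (ZMod 2)) ≃* DihedralGroup 0 :=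
  let a : Coprod (Multiplicative (ZMod 2)) (Multiplicative (ZMod 2)) := Coprod.inl (.ofAdd 1)
  let b : Coprod (Multiplicative (ZMod 2)) (Multiplicative (ZMod 2)) := Coprod.inr (.ofAdd 1)
  have ha : a * a = 1 := by rw [← map_mul, Multiplicative.zmodTwo_ofAdd_one_mul_self, map_one]
  have hb : b * b = 1 := by rw [← map_mul, Multiplicative.zmodTwo_ofAdd_one_mul_self, map_one]
  have hab : a * (a * b) * a = (a * b)⁻¹ := by
    rw [← mul_assoc, ha, one_mul, mul_inv_rev, inv_eq_of_mul_eq_one_right ha,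
      inv_eq_of_mul_eq_one_right hb]
  MonoidHom.toMulEquiv
    (Coprod.lift (involutionHom (sr 0) (sr_mul_self 0)) (involutionHom (sr 1) (sr_mul_self 1)))
    (zeroLift a (a * b) ha hab)
    (Coprod.hom_ext (Multiplicative.zmodTwo_monoidHom_ext (by simp [a, involutionHom_ofAdd_one]))
      (Multiplicative.zmodTwo_monoidHom_ext
        (by simp [a, b, involutionHom_ofAdd_one, ← mul_assoc, ha])))
    (by
      ext x
      rcases x with i | i
      · simp [a, b, involutionHom_ofAdd_one, sr_mul_sr]
      · simp [a, b, involutionHom_ofAdd_one, sr_mul_sr, sr_mul_r])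

theorem Monoid.Coprod.zmodTwo_exists_mul_self_mem_of_not_normalizer_le
    {H : Subgroup (Coprod (Multiplicative (ZMod 2)) (Multiplicative (ZMod 2)))}
    (hH : ¬ Subgroup.normalizer (H : Set _) ≤ H) :
    ∃ x ∈ Subgroup.normalizer (H : Set _), x ∉ H ∧ x * x ∈ H := by
  set e := coprodZModTwoEquiv
  have hN := H.map_equiv_normalizer_eq e
  obtain ⟨y, hyN, hy, hy2⟩ := DihedralGroup.exists_mul_self_mem_of_not_normalizer_le
    (H := H.map e.toMonoidHom) fun hle => hH fun x hx => by
      have hex := hle (hN ▸ Subgroup.mem_map_of_mem e.toMonoidHom hx)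
      simpa using hex
  rw [← hN, Subgroup.mem_map_equiv] at hyN
  rw [Subgroup.mem_map_equiv] at hy hy2
  exact ⟨e.symm y, hyN, hy, by rwa [← map_mul]⟩

/-- The infinite dihedral group `ℤ/2 * ℤ/2` is not telescopic: some finite group `Γ`
is not realised as `N(H)/H` for any finite-index subgroup `H`. -/
theorem infinite_dihedral_not_telescopic :
    ∃ (Γ : Type) (_ : Group Γ) (_ : Finite Γ),
      ∀ H : Subgroup (Coprod (Multiplicative (ZMod 2)) (Multiplicative (ZMod 2))),
        H.FiniteIndex →
          ¬ Nonempty ((Subgroup.normalizer (H : Set (Coprod (Multiplicative (ZMod 2)) (Multiplicative (ZMod 2)))) ⧸ H.subgroupOf (Subgroup.normalizer (H : Set (Coprod (Multiplicative (ZMod 2)) (Multiplicative (ZMod 2)))))) ≃* Γ) := by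
  refine ⟨Multiplicative (ZMod 3), inferInstance, inferInstance, fun H _ ⟨e⟩ => ?_⟩
  have : Nontrivial H.weylGroup := e.toEquiv.nontrivial
  obtain ⟨x, hxN, hx, hx2⟩ :=
    Coprod.zmodTwo_exists_mul_self_mem_of_not_normalizer_le H.not_normalizer_le_of_nontrivial
  have h3 := orderOf_dvd_natCard (e (QuotientGroup.mk ⟨x, hxN⟩))
  rw [e.orderOf_eq, Subgroup.orderOf_weylGroup_mk_eq_two hxN hx hx2, Nat.card_eq_fintype_card] at h3
  norm_num at h3
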